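/- Let H = (V1,...,Vd, E) be a d-partite d-uniform hypergraph, and fix a type i. Let H_i be the (d−1)-partite hypergraph whose edges E_i are the edges of H with the type-i vertex removed, and let B_i be the bipartite graph on (V_i, E_i) where v ∈ V_i is joined to Y ∈ E_i whenever {v} ∪ Y ∈ E. Then for any subsets W_j ⊆ V_j (j = 1,...,d): disc_H(W_1,...,W_d) ≤ disc_{B_i}(W_i, E_i(W_1,...,W_d)) + (|W_i|/|V_i|)·disc_{H_i}(W_1,...,W_{i−1},W_{i+1},...,W_d). -/

import Mathlib

/-
An edge of `H` lies in `W₁ × ⋯ × W_d` exactly when its type-`i` vertex lies in `W_i` and its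
wall lies in `E_i(W₁,…,W_d)`, so the edge density of `H` on the `W_j` is the edge density of
`B_i` on `(W_i, E_i(W₁,…,W_d))`. Writing `x` for this density, `p = |W_i|/|V_i|`,
`r = |E_i(W₁,…,W_d)|/|E_i|` and `q = ∏_{j ≠ i} |W_j|/|V_j|`, the target product is `p q`, and
`x - p q = (x - p r) + p (r - q)` gives the bound by the triangle inequality.
-/

open scoped BigOperators

/-- Remove the coordinate of type `i` from an edge of a `d`-partite hypergraph. -/
def coordRestrict (d : ℕ) (V : Fin d → Type) (i : Fin d) (e : ∀ j, V j) :
    ∀ j : {j : Fin d // j ≠ i}, V j.1 :=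
  fun j => e j.1

lemma abs_sub_mul_le_abs_sub_mul_add_mul_abs_sub {x p q r : ℝ} (hp : 0 ≤ p) :
    |x - p * q| ≤ |x - p * r| + p * |r - q| := by
  calc |x - p * q| = |(x - p * r) + p * (r - q)| := by ring_nf
    _ ≤ |x - p * r| + |p * (r - q)| := abs_add_le _ _
    _ = |x - p * r| + p * |r - q| := by rw [abs_mul, abs_of_nonneg hp]

lemma filter_forall_mem_eq_filter_mem_and_coordRestrict_mem
    (d : ℕ) (V : Fin d → Type) [∀ j, Fintype (V j)] [∀ j, DecidableEq (V j)]
    (E : Finset (∀ j, V j)) (i : Fin d) (W : ∀ j, Finset (V j)) :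
    (E.filter fun e => ∀ j, e j ∈ W j) =
      E.filter fun e => e i ∈ W i ∧ coordRestrict d V i e ∈
        (E.image (coordRestrict d V i)).filter fun y => ∀ j : {j : Fin d // j ≠ i}, y j ∈ W j.1 := by
  refine Finset.filter_congr fun e he => ?_
  simp only [Finset.mem_filter, Finset.mem_image]
  constructor
  · intro hW
    exact ⟨hW i, ⟨e, he, rfl⟩, fun j => hW j.1⟩
  · rintro ⟨hWi, -, hWne⟩ j
    by_cases hj : j = i
    · exact hj ▸ hWi
    · exact hWne ⟨j, hj⟩

/-- For a `d`-partite `d`-uniform hypergraph `H = (V₁,…,V_d,E)`, a type `i`,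
the induced hypergraph `H_i` (type-`i` vertices removed) and the vertex-vs-wall bipartite
graph `B_i`, and any subsets `W_j ⊆ V_j`:
`disc_H(W₁,…,W_d) ≤ disc_{B_i}(W_i, E_i(W₁,…,W_d)) + (|W_i|/|V_i|)·disc_{H_i}(W₁,…,Ŵ_i,…,W_d)`. -/
theorem hypergraph_discrepancy_reduction
    (d : ℕ) (V : Fin d → Type) [∀ j, Fintype (V j)] [∀ j, DecidableEq (V j)]
    (E : Finset (∀ j, V j)) (i : Fin d) (W : ∀ j, Finset (V j)) :
    -- the walls of cotype `i`
    let Ei : Finset (∀ j : {j : Fin d // j ≠ i}, V j.1) := E.image (coordRestrict d V i)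
    -- the walls of cotype `i` with all vertices in the sets `W_j`, `j ≠ i`
    let EiW : Finset (∀ j : {j : Fin d // j ≠ i}, V j.1) :=
      Ei.filter fun y => ∀ j : {j : Fin d // j ≠ i}, y j ∈ W j.1
    -- discrepancy of `W₁,…,W_d` in `H`
    let discH : ℝ :=
      |((E.filter fun e => ∀ j, e j ∈ W j).card : ℝ) / E.card -
        ∏ j, ((W j).card : ℝ) / Fintype.card (V j)|
    -- discrepancy of `(W_i, E_i(W₁,…,W_d))` in the bipartite graph `B_i`
    let discBi : ℝ :=
      |((E.filter fun e => e i ∈ W i ∧ coordRestrict d V i e ∈ EiW).card : ℝ) / E.card -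
        (((W i).card : ℝ) / Fintype.card (V i)) * ((EiW.card : ℝ) / Ei.card)|
    -- discrepancy of `W₁,…,Ŵ_i,…,W_d` in the induced hypergraph `H_i`
    let discHi : ℝ :=
      |((EiW.card : ℝ) / Ei.card) -
        ∏ j : {j : Fin d // j ≠ i}, ((W j.1).card : ℝ) / Fintype.card (V j.1)|
    discH ≤ discBi + (((W i).card : ℝ) / Fintype.card (V i)) * discHi := by
  intro Ei EiW discH discBi discHi
  have hdiscH : discH =
      |((E.filter fun e => e i ∈ W i ∧ coordRestrict d V i e ∈ EiW).card : ℝ) / E.card -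
        ((W i).card : ℝ) / Fintype.card (V i) *
          ∏ j : {j : Fin d // j ≠ i}, ((W j.1).card : ℝ) / Fintype.card (V j.1)| := by
    rw [← Fintype.prod_eq_mul_prod_subtype_ne (fun j => ((W j).card : ℝ) / Fintype.card (V j)),
      ← filter_forall_mem_eq_filter_mem_and_coordRestrict_mem]
  rw [hdiscH]
  exact abs_sub_mul_le_abs_sub_mul_add_mul_abs_sub (by positivity)
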